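/- Let C ⇄ A ⇄ H (with maps j, p, i, π) be a weak m-Hom admissible mapping system, where (C ♯_σ^× H, β ⊗ α) is a Radford [(m,k),m]-biproduct monoidal Hom-bialgebra whose smash-coproduct structure uses the left H-coaction c ↦ c₍₋₁₎ ⊗ c₍₀₎ on C. Then for all a ∈ A: α^{m+1}((p(a₁))₍₋₁₎) π(a₂) ⊗ β((p(a₁))₍₀₎) = α(π(a₁)) ⊗ p(a₂). -/

import Mathlib

open TensorProduct

noncomputable section

/-- A monoidal Hom-algebra `(A, β)`. -/
structure HomAlgebraStr (K : Type*) (A : Type*) [Field K] [AddCommGroup A] [Module K A] where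
  mul : A →ₗ[K] A →ₗ[K] A
  one : A
  str : A ≃ₗ[K] A
  hom_assoc : ∀ a b c : A, mul (str a) (mul b c) = mul (mul a b) (str c)
  str_mul : ∀ a b : A, str (mul a b) = mul (str a) (str b)
  mul_one : ∀ a : A, mul a one = str a
  one_mul : ∀ a : A, mul one a = str a
  str_one : str one = one

/-- A monoidal Hom-coalgebra `(C, γ)`. -/
structure HomCoalgebraStr (K : Type*) (C : Type*) [Field K] [AddCommGroup C] [Module K C] where
  comul : C →ₗ[K] C ⊗[K] C
  counit : C →ₗ[K] K
  str : C ≃ₗ[K] C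
  hom_coassoc : ∀ c : C,
    TensorProduct.map str.symm.toLinearMap comul (comul c)
      = TensorProduct.assoc K C C C (TensorProduct.map comul str.symm.toLinearMap (comul c))
  comul_str : ∀ c : C, comul (str c) = TensorProduct.map str.toLinearMap str.toLinearMap (comul c)
  counit_comul_left : ∀ c : C,
    TensorProduct.lid K C (TensorProduct.map counit (LinearMap.id : C →ₗ[K] C) (comul c)) = str.symm c
  counit_comul_right : ∀ c : C,
    TensorProduct.rid K C (TensorProduct.map (LinearMap.id : C →ₗ[K] C) counit (comul c)) = str.symm c
  counit_str : ∀ c : C, counit (str c) = counit c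

/-- The componentwise multiplication on `N ⊗ N` induced by a bilinear multiplication on `N`. -/
def tensorSquareMul {K N : Type*} [Field K] [AddCommGroup N] [Module K N]
    (mul : N →ₗ[K] N →ₗ[K] N) :
    (N ⊗[K] N) →ₗ[K] (N ⊗[K] N) →ₗ[K] (N ⊗[K] N) :=
  TensorProduct.curry
    ((TensorProduct.map (TensorProduct.lift mul) (TensorProduct.lift mul)) ∘ₗ
      (TensorProduct.tensorTensorTensorComm K N N N N).toLinearMap)

/-- A monoidal Hom-bialgebra `(H, α)`. -/
structure HomBialgebraStr (K : Type*) (H : Type*) [Field K] [AddCommGroup H] [Module K H]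
    extends HomAlgebraStr K H where
  comul : H →ₗ[K] H ⊗[K] H
  counit : H →ₗ[K] K
  hom_coassoc : ∀ c : H,
    TensorProduct.map str.symm.toLinearMap comul (comul c)
      = TensorProduct.assoc K H H H (TensorProduct.map comul str.symm.toLinearMap (comul c))
  comul_str : ∀ c : H, comul (str c) = TensorProduct.map str.toLinearMap str.toLinearMap (comul c)
  counit_comul_left : ∀ c : H,
    TensorProduct.lid K H (TensorProduct.map counit (LinearMap.id : H →ₗ[K] H) (comul c)) = str.symm c
  counit_comul_right : ∀ c : H,
    TensorProduct.rid K H (TensorProduct.map (LinearMap.id : H →ₗ[K] H) counit (comul c)) = str.symm c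
  counit_str : ∀ c : H, counit (str c) = counit c
  comul_mul : ∀ a b : H, comul (mul a b) = tensorSquareMul mul (comul a) (comul b)
  comul_one : comul one = one ⊗ₜ[K] one
  counit_mul : ∀ a b : H, counit (mul a b) = counit a * counit b
  counit_one : counit one = 1

/-- A monoidal Hom-Hopf algebra `(H, α, S)`. -/
structure HomHopfStr (K : Type*) (H : Type*) [Field K] [AddCommGroup H] [Module K H]
    extends HomBialgebraStr K H where
  antipode : H →ₗ[K] H
  antipode_str : ∀ h : H, antipode (str h) = str (antipode h)
  antipode_mul_left : ∀ h : H,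
    TensorProduct.lift (mul ∘ₗ antipode) (comul h) = counit h • one
  antipode_mul_right : ∀ h : H,
    TensorProduct.lift (mul.compl₂ antipode) (comul h) = counit h • one

section Defs

variable {K H A C M : Type*} [Field K]
variable [AddCommGroup H] [Module K H] [AddCommGroup A] [Module K A]
variable [AddCommGroup C] [Module K C] [AddCommGroup M] [Module K M]

/-- `(A, β)` is a left weak `(H, α)`-Hom-module algebra via `act`:
`h·(ab) = (h₁·a)(h₂·b)` and `h·1 = ε(h)1`. -/
structure IsWeakModuleAlgebra (HB : HomBialgebraStr K H) (AA : HomAlgebraStr K A)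
    (act : H →ₗ[K] A →ₗ[K] A) : Prop where
  act_mul : ∀ (h : H) (a b : A),
    act h (AA.mul a b)
      = TensorProduct.lift AA.mul
          (TensorProduct.map (TensorProduct.lift act) (TensorProduct.lift act)
            (TensorProduct.map ((TensorProduct.mk K H A).flip a) ((TensorProduct.mk K H A).flip b)
              (HB.comul h)))
  act_one : ∀ h : H, act h AA.one = HB.counit h • AA.one

/-- `(C, β)` is a left `(H, α)`-Hom-comodule coalgebra via `coact a = a₍₋₁₎ ⊗ a₍₀₎`. -/
structure IsComoduleCoalgebra (HB : HomBialgebraStr K H) (CC : HomCoalgebraStr K C)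
    (coact : C →ₗ[K] H ⊗[K] C) : Prop where
  comodule_coassoc : ∀ c : C,
    TensorProduct.assoc K H H C
        (TensorProduct.map HB.comul CC.str.symm.toLinearMap (coact c))
      = TensorProduct.map HB.str.symm.toLinearMap coact (coact c)
  coact_str : ∀ c : C,
    coact (CC.str c) = TensorProduct.map HB.str.toLinearMap CC.str.toLinearMap (coact c)
  counit_coact : ∀ c : C,
    TensorProduct.lid K C (TensorProduct.map HB.counit (LinearMap.id : C →ₗ[K] C) (coact c))
      = CC.str.symm c
  coact_comul : ∀ c : C,
    TensorProduct.map (LinearMap.id : H →ₗ[K] H) CC.comul (coact c)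
      = TensorProduct.map (TensorProduct.lift HB.mul) (LinearMap.id : C ⊗[K] C →ₗ[K] C ⊗[K] C)
          (TensorProduct.tensorTensorTensorComm K H C H C
            (TensorProduct.map coact coact (CC.comul c)))
  counit_coact_one : ∀ c : C,
    TensorProduct.rid K H (TensorProduct.map (LinearMap.id : H →ₗ[K] H) CC.counit (coact c))
      = CC.counit c • HB.one

/-- The `(m,k)`-Hom-crossed product multiplication on simple tensors:
`(a ♯ h)(b ♯ g) = a[(α^m(h₁₁)·β⁻²(b)) σ(α^{k+1}(h₁₂), α^k(g₁))] ♯ α(h₂g₂)`. -/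
def cpMulElem (HB : HomBialgebraStr K H) (AA : HomAlgebraStr K A)
    (act : H →ₗ[K] A →ₗ[K] A) (σ : H →ₗ[K] H →ₗ[K] A) (m k : ℤ)
    (a : A) (h : H) (b : A) (g : H) : A ⊗[K] H :=
  TensorProduct.map
    ((AA.mul a) ∘ₗ TensorProduct.lift AA.mul ∘ₗ
      TensorProduct.map
        ((act.flip ((AA.str ^ (-2 : ℤ)) b)) ∘ₗ (HB.str ^ m).toLinearMap)
        (TensorProduct.lift σ ∘ₗ
          TensorProduct.map (HB.str ^ (k+1)).toLinearMap (HB.str ^ k).toLinearMap) ∘ₗ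
      (TensorProduct.assoc K H H H).toLinearMap)
    (HB.str.toLinearMap ∘ₗ TensorProduct.lift HB.mul)
    (TensorProduct.map (TensorProduct.map HB.comul (LinearMap.id : H →ₗ[K] H))
      (LinearMap.id : H ⊗[K] H →ₗ[K] H ⊗[K] H)
      (TensorProduct.tensorTensorTensorComm K H H H H (HB.comul h ⊗ₜ[K] HB.comul g)))

/-- The `m`-Hom-smash product multiplication on simple tensors:
`(a ♯ h)(b ♯ g) = a(α^m(h₁)·β⁻¹(b)) ♯ α(h₂)g`. -/
def smashMulElem (HB : HomBialgebraStr K H) (AA : HomAlgebraStr K A)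
    (act : H →ₗ[K] A →ₗ[K] A) (m : ℤ) (a : A) (h : H) (b : A) (g : H) : A ⊗[K] H :=
  TensorProduct.map
    ((AA.mul a) ∘ₗ (act.flip ((AA.str ^ (-1 : ℤ)) b)) ∘ₗ (HB.str ^ m).toLinearMap)
    ((HB.mul.flip g) ∘ₗ HB.str.toLinearMap)
    (HB.comul h)

/-- The `m`-Hom-smash coproduct comultiplication on simple tensors:
`Δ(a ⋊ h) = (a₁ ⋊ α^m(a₂₍₋₁₎)α⁻¹(h₁)) ⊗ (β(a₂₍₀₎) ⋊ h₂)`. -/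
def scComulElem (HB : HomBialgebraStr K H) (AC : HomCoalgebraStr K A)
    (coact : A →ₗ[K] H ⊗[K] A) (m : ℤ) (a : A) (h : H) :
    (A ⊗[K] H) ⊗[K] (A ⊗[K] H) :=
  TensorProduct.map
    (TensorProduct.map (LinearMap.id : A →ₗ[K] A)
        (TensorProduct.lift HB.mul ∘ₗ
          TensorProduct.map (HB.str ^ m).toLinearMap (HB.str ^ (-1 : ℤ)).toLinearMap) ∘ₗ
      (TensorProduct.assoc K A H H).toLinearMap)
    (TensorProduct.map AC.str.toLinearMap (LinearMap.id : H →ₗ[K] H))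
    (TensorProduct.tensorTensorTensorComm K (A ⊗[K] H) A H H
      ((TensorProduct.assoc K A H A).symm
          (TensorProduct.map (LinearMap.id : A →ₗ[K] A) coact (AC.comul a)) ⊗ₜ[K] HB.comul h))

/-- Condition (1) of Theorem 2.3. -/
def CPCond1 (HB : HomBialgebraStr K H) (AA : HomAlgebraStr K A)
    (σ : H →ₗ[K] H →ₗ[K] A) : Prop :=
  (∀ h : H, σ h HB.one = HB.counit h • AA.one) ∧
  (∀ h : H, σ HB.one h = HB.counit h • AA.one) ∧
  (∀ h g : H, σ (HB.str h) (HB.str g) = AA.str (σ h g))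

/-- Condition (2) of Theorem 2.3:
`[α^m(h₁l₁)·a] σ(α^{k+2}(h₂), α^{k+2}(l₂)) = σ(α^{k+2}(h₁), α^{k+2}(l₁)) [α^m(h₂l₂)·a]`. -/
def CPCond2 (HB : HomBialgebraStr K H) (AA : HomAlgebraStr K A)
    (act : H →ₗ[K] A →ₗ[K] A) (σ : H →ₗ[K] H →ₗ[K] A) (m k : ℤ) : Prop :=
  ∀ (h l : H) (a : A),
    TensorProduct.lift AA.mul
      (TensorProduct.map
        ((act.flip a) ∘ₗ (HB.str ^ m).toLinearMap ∘ₗ TensorProduct.lift HB.mul)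
        (TensorProduct.lift σ ∘ₗ
          TensorProduct.map (HB.str ^ (k+2)).toLinearMap (HB.str ^ (k+2)).toLinearMap)
        (TensorProduct.tensorTensorTensorComm K H H H H (HB.comul h ⊗ₜ[K] HB.comul l)))
    =
    TensorProduct.lift AA.mul
      (TensorProduct.map
        (TensorProduct.lift σ ∘ₗ
          TensorProduct.map (HB.str ^ (k+2)).toLinearMap (HB.str ^ (k+2)).toLinearMap)
        ((act.flip a) ∘ₗ (HB.str ^ m).toLinearMap ∘ₗ TensorProduct.lift HB.mul)
        (TensorProduct.tensorTensorTensorComm K H H H H (HB.comul h ⊗ₜ[K] HB.comul l)))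

/-- Condition (3) of Theorem 2.3:
`[α^{m+1}(h₁)·σ(α^{k+1}(l₁), α^{k+1}(g₁))] σ(α^{k+2}(h₂), α^{k+1}(l₂g₂))
  = σ(α^{k+2}(h₁), α^{k+2}(l₁)) σ(α^{k+1}(h₂l₂), α^{k+1}(g))`. -/
def CPCond3 (HB : HomBialgebraStr K H) (AA : HomAlgebraStr K A)
    (act : H →ₗ[K] A →ₗ[K] A) (σ : H →ₗ[K] H →ₗ[K] A) (m k : ℤ) : Prop :=
  ∀ h l g : H,
    TensorProduct.lift AA.mul
      (TensorProduct.map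
        (TensorProduct.lift act ∘ₗ
          TensorProduct.map (HB.str ^ (m+1)).toLinearMap
            (TensorProduct.lift σ ∘ₗ
              TensorProduct.map (HB.str ^ (k+1)).toLinearMap (HB.str ^ (k+1)).toLinearMap))
        (TensorProduct.lift σ ∘ₗ
          TensorProduct.map (HB.str ^ (k+2)).toLinearMap
            ((HB.str ^ (k+1)).toLinearMap ∘ₗ TensorProduct.lift HB.mul))
        (TensorProduct.tensorTensorTensorComm K H H (H ⊗[K] H) (H ⊗[K] H)
          (HB.comul h ⊗ₜ[K]
            (TensorProduct.tensorTensorTensorComm K H H H H (HB.comul l ⊗ₜ[K] HB.comul g)))))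
    =
    TensorProduct.lift AA.mul
      (TensorProduct.map
        (TensorProduct.lift σ ∘ₗ
          TensorProduct.map (HB.str ^ (k+2)).toLinearMap (HB.str ^ (k+2)).toLinearMap)
        ((σ.flip ((HB.str ^ (k+1)) g)) ∘ₗ (HB.str ^ (k+1)).toLinearMap ∘ₗ TensorProduct.lift HB.mul)
        (TensorProduct.tensorTensorTensorComm K H H H H (HB.comul h ⊗ₜ[K] HB.comul l)))

/-- `σ` is a twisted comodule cocycle:
`β(a₁) ⊗ α^{m+1}(a₂₍₋₁₎)g ⊗ a₂₍₀₎
  = a₁σ(α^{k+m+2}(a₂₍₋₁₎₁), α^{k+1}(g₁)) ⊗ α^{m+2}(a₂₍₋₁₎₂)α(g₂) ⊗ a₂₍₀₎`. -/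
def IsTwistedCocycle (HB : HomBialgebraStr K H) (AA : HomAlgebraStr K A)
    (AC : HomCoalgebraStr K A) (coact : A →ₗ[K] H ⊗[K] A)
    (σ : H →ₗ[K] H →ₗ[K] A) (m k : ℤ) : Prop :=
  ∀ (a : A) (g : H),
    (TensorProduct.assoc K A H A).symm
      (TensorProduct.map AA.str.toLinearMap
        (TensorProduct.map ((HB.mul.flip g) ∘ₗ (HB.str ^ (m+1)).toLinearMap)
          (LinearMap.id : A →ₗ[K] A))
        (TensorProduct.map (LinearMap.id : A →ₗ[K] A) coact (AC.comul a)))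
    =
    TensorProduct.map
      (TensorProduct.map (TensorProduct.lift AA.mul) (LinearMap.id : H →ₗ[K] H)
        ∘ₗ (TensorProduct.assoc K A A H).symm.toLinearMap
        ∘ₗ TensorProduct.map (LinearMap.id : A →ₗ[K] A)
            (TensorProduct.map
              (TensorProduct.lift σ ∘ₗ
                TensorProduct.map (HB.str ^ (k+m+2)).toLinearMap (HB.str ^ (k+1)).toLinearMap)
              (TensorProduct.lift HB.mul ∘ₗ
                TensorProduct.map (HB.str ^ (m+2)).toLinearMap HB.str.toLinearMap)
            ∘ₗ (TensorProduct.tensorTensorTensorComm K H H H H).toLinearMap)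
        ∘ₗ (TensorProduct.assoc K A (H ⊗[K] H) (H ⊗[K] H)).toLinearMap)
      (LinearMap.id : A →ₗ[K] A)
      ((TensorProduct.assoc K (A ⊗[K] (H ⊗[K] H)) (H ⊗[K] H) A).symm
        (TensorProduct.map (LinearMap.id : A ⊗[K] (H ⊗[K] H) →ₗ[K] A ⊗[K] (H ⊗[K] H))
          (TensorProduct.comm K A (H ⊗[K] H)).toLinearMap
          (TensorProduct.assoc K (A ⊗[K] (H ⊗[K] H)) A (H ⊗[K] H)
            ((TensorProduct.assoc K A (H ⊗[K] H) A).symm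
                (TensorProduct.map (LinearMap.id : A →ₗ[K] A)
                  (TensorProduct.map HB.comul (LinearMap.id : A →ₗ[K] A))
                  (TensorProduct.map (LinearMap.id : A →ₗ[K] A) coact (AC.comul a)))
              ⊗ₜ[K] HB.comul g))))

/-- Auxiliary map `(n ⊗ w) ⊗ t ↦ (α^j(n)·t) ⊗ f(w)` on `(H ⊗ M) ⊗ H`. -/
def coactMulAux (HB : HomBialgebraStr K H) (j : ℤ) (f : M →ₗ[K] M) :
    (H ⊗[K] M) ⊗[K] H →ₗ[K] H ⊗[K] M :=
  TensorProduct.map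
      (TensorProduct.lift HB.mul ∘ₗ
        TensorProduct.map (HB.str ^ j).toLinearMap (LinearMap.id : H →ₗ[K] H)) f
    ∘ₗ (TensorProduct.assoc K H H M).symm.toLinearMap
    ∘ₗ TensorProduct.map (LinearMap.id : H →ₗ[K] H) (TensorProduct.comm K M H).toLinearMap
    ∘ₗ (TensorProduct.assoc K H M H).toLinearMap

/-- (A1): `ε_A` is an algebra map. -/
def CondA1 (AA : HomAlgebraStr K A) (AC : HomCoalgebraStr K A) : Prop :=
  (∀ a b : A, AC.counit (AA.mul a b) = AC.counit a * AC.counit b) ∧ AC.counit AA.one = 1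

/-- (A2): `ε_A(h·a) = ε_H(h)ε_A(a)`. -/
def CondA2 (HB : HomBialgebraStr K H) (AC : HomCoalgebraStr K A)
    (act : H →ₗ[K] A →ₗ[K] A) : Prop :=
  ∀ (h : H) (a : A), AC.counit (act h a) = HB.counit h * AC.counit a

/-- (A3): `σ` is a coalgebra map. -/
def CondA3 (HB : HomBialgebraStr K H) (AC : HomCoalgebraStr K A)
    (σ : H →ₗ[K] H →ₗ[K] A) : Prop :=
  (∀ h g : H,
    AC.comul (σ h g)
      = TensorProduct.map (TensorProduct.lift σ) (TensorProduct.lift σ)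
          (TensorProduct.tensorTensorTensorComm K H H H H (HB.comul h ⊗ₜ[K] HB.comul g))) ∧
  (∀ h g : H, AC.counit (σ h g) = HB.counit h * HB.counit g)

/-- (A4): `Δ_A(1_A) = 1_A ⊗ 1_A`. -/
def CondA4 (AA : HomAlgebraStr K A) (AC : HomCoalgebraStr K A) : Prop :=
  AC.comul AA.one = AA.one ⊗ₜ[K] AA.one

/-- (A5): the coaction is an algebra map. -/
def CondA5 (HB : HomBialgebraStr K H) (AA : HomAlgebraStr K A)
    (coact : A →ₗ[K] H ⊗[K] A) : Prop :=
  (∀ a b : A,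
    coact (AA.mul a b)
      = TensorProduct.map (TensorProduct.lift HB.mul) (TensorProduct.lift AA.mul)
          (TensorProduct.tensorTensorTensorComm K H A H A (coact a ⊗ₜ[K] coact b))) ∧
  coact AA.one = HB.one ⊗ₜ[K] AA.one

/-- (A6). -/
def CondA6 (HB : HomBialgebraStr K H) (coact : A →ₗ[K] H ⊗[K] A)
    (σ : H →ₗ[K] H →ₗ[K] A) (m k : ℤ) : Prop :=
  ∀ h g : H,
    coactMulAux HB (m-1) (LinearMap.id : A →ₗ[K] A)
      (TensorProduct.map
        (coact ∘ₗ TensorProduct.lift σ ∘ₗ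
          TensorProduct.map (HB.str ^ (k+2)).toLinearMap (HB.str ^ (k+2)).toLinearMap)
        ((HB.str ^ (-1 : ℤ)).toLinearMap ∘ₗ TensorProduct.lift HB.mul)
        (TensorProduct.tensorTensorTensorComm K H H H H (HB.comul h ⊗ₜ[K] HB.comul g)))
    =
    TensorProduct.map (TensorProduct.lift HB.mul)
      (TensorProduct.lift σ ∘ₗ
        TensorProduct.map (HB.str ^ (k+1)).toLinearMap (HB.str ^ (k+1)).toLinearMap)
      (TensorProduct.tensorTensorTensorComm K H H H H (HB.comul h ⊗ₜ[K] HB.comul g))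

/-- (A7). -/
def CondA7 (HB : HomBialgebraStr K H) (AA : HomAlgebraStr K A) (AC : HomCoalgebraStr K A)
    (act : H →ₗ[K] A →ₗ[K] A) (coact : A →ₗ[K] H ⊗[K] A)
    (σ : H →ₗ[K] H →ₗ[K] A) (m k : ℤ) : Prop :=
  ∀ a b : A,
    AC.comul (AA.mul a b) =
      TensorProduct.map
        (TensorProduct.lift AA.mul
          ∘ₗ TensorProduct.map (LinearMap.id : A →ₗ[K] A)
              (TensorProduct.lift AA.mul
                ∘ₗ TensorProduct.map
                    (TensorProduct.lift act ∘ₗ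
                      TensorProduct.map (HB.str ^ (2*m)).toLinearMap (AA.str ^ (-2 : ℤ)).toLinearMap)
                    (TensorProduct.lift σ ∘ₗ
                      TensorProduct.map (HB.str ^ (k+m+1)).toLinearMap (HB.str ^ (k+m)).toLinearMap)
                ∘ₗ (TensorProduct.tensorTensorTensorComm K H H A H).toLinearMap)
          ∘ₗ (TensorProduct.assoc K A (H ⊗[K] H) (A ⊗[K] H)).toLinearMap)
        (AA.str.toLinearMap ∘ₗ TensorProduct.lift AA.mul)
        (TensorProduct.tensorTensorTensorComm K (A ⊗[K] (H ⊗[K] H)) A (A ⊗[K] H) A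
          ((TensorProduct.assoc K A (H ⊗[K] H) A).symm
              (TensorProduct.map (LinearMap.id : A →ₗ[K] A)
                (TensorProduct.map HB.comul (LinearMap.id : A →ₗ[K] A))
                (TensorProduct.map (LinearMap.id : A →ₗ[K] A) coact (AC.comul a)))
            ⊗ₜ[K]
            (TensorProduct.assoc K A H A).symm
              (TensorProduct.map (LinearMap.id : A →ₗ[K] A) coact (AC.comul b))))

/-- (A8). -/
def CondA8 (HB : HomBialgebraStr K H) (AA : HomAlgebraStr K A) (AC : HomCoalgebraStr K A)
    (act : H →ₗ[K] A →ₗ[K] A) (coact : A →ₗ[K] H ⊗[K] A)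
    (σ : H →ₗ[K] H →ₗ[K] A) (m k : ℤ) : Prop :=
  ∀ (h : H) (b : A),
    AC.comul (act ((HB.str ^ m) h) b) =
      TensorProduct.map
        (TensorProduct.lift AA.mul
          ∘ₗ TensorProduct.map
              (TensorProduct.lift act ∘ₗ
                TensorProduct.map (HB.str ^ m).toLinearMap (AA.str ^ (-1 : ℤ)).toLinearMap)
              (TensorProduct.lift σ ∘ₗ
                TensorProduct.map (HB.str ^ (k+1)).toLinearMap (HB.str ^ (k+m+1)).toLinearMap)
          ∘ₗ (TensorProduct.tensorTensorTensorComm K H H A H).toLinearMap)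
        (TensorProduct.lift act ∘ₗ
          TensorProduct.map (HB.str ^ m).toLinearMap AA.str.toLinearMap)
        (TensorProduct.tensorTensorTensorComm K (H ⊗[K] H) H (A ⊗[K] H) A
          (TensorProduct.map HB.comul (LinearMap.id : H →ₗ[K] H) (HB.comul h)
            ⊗ₜ[K]
            (TensorProduct.assoc K A H A).symm
              (TensorProduct.map (LinearMap.id : A →ₗ[K] A) coact (AC.comul b))))

/-- (A9). -/
def CondA9 (HB : HomBialgebraStr K H) (act : H →ₗ[K] A →ₗ[K] A)
    (coact : A →ₗ[K] H ⊗[K] A) (m : ℤ) : Prop :=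
  ∀ (h : H) (b : A),
    coactMulAux HB (m-1) (LinearMap.id : A →ₗ[K] A)
      (TensorProduct.map (coact ∘ₗ (act.flip b) ∘ₗ (HB.str ^ (m+1)).toLinearMap)
        (LinearMap.id : H →ₗ[K] H) (HB.comul h))
    =
    TensorProduct.map
      (TensorProduct.lift HB.mul ∘ₗ
        TensorProduct.map (LinearMap.id : H →ₗ[K] H) (HB.str ^ m).toLinearMap)
      (TensorProduct.lift act ∘ₗ
        TensorProduct.map (HB.str ^ m).toLinearMap (LinearMap.id : A →ₗ[K] A))
      (TensorProduct.tensorTensorTensorComm K H H H A (HB.comul h ⊗ₜ[K] coact b))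

/-- The Radford `[(m,k),m]`-biproduct structure on `A ⊗ H`. -/
structure IsRadfordBiproduct (HB : HomBialgebraStr K H) (AA : HomAlgebraStr K A)
    (AC : HomCoalgebraStr K A) (act : H →ₗ[K] A →ₗ[K] A) (coact : A →ₗ[K] H ⊗[K] A)
    (σ : H →ₗ[K] H →ₗ[K] A) (m k : ℤ) (B : HomBialgebraStr K (A ⊗[K] H)) : Prop where
  mul_def : ∀ (a : A) (h : H) (b : A) (g : H),
    B.mul (a ⊗ₜ[K] h) (b ⊗ₜ[K] g) = cpMulElem HB AA act σ m k a h b g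
  one_def : B.one = AA.one ⊗ₜ[K] HB.one
  comul_def : ∀ (a : A) (h : H), B.comul (a ⊗ₜ[K] h) = scComulElem HB AC coact m a h
  counit_def : ∀ (a : A) (h : H), B.counit (a ⊗ₜ[K] h) = AC.counit a * HB.counit h
  str_def : B.str = TensorProduct.congr AA.str HB.str

/-- `S_H` is a `σ`-antipode for `(H, α)`. -/
structure IsSigmaAntipode (HB : HomBialgebraStr K H) (AA : HomAlgebraStr K A)
    (σ : H →ₗ[K] H →ₗ[K] A) (S : H →ₗ[K] H) : Prop where
  antipode_str : ∀ h : H, S (HB.str h) = HB.str (S h)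
  right : ∀ h : H,
    TensorProduct.map (TensorProduct.lift σ) (TensorProduct.lift HB.mul)
        (TensorProduct.tensorTensorTensorComm K H H H H
          (TensorProduct.map HB.comul (HB.comul ∘ₗ S) (HB.comul h)))
      = HB.counit h • (AA.one ⊗ₜ[K] HB.one)
  left : ∀ h : H,
    TensorProduct.map (TensorProduct.lift σ) (TensorProduct.lift HB.mul)
        (TensorProduct.tensorTensorTensorComm K H H H H
          (TensorProduct.map (HB.comul ∘ₗ S) HB.comul (HB.comul h)))
      = HB.counit h • (AA.one ⊗ₜ[K] HB.one)

/-- `S_A` is a convolution inverse of `id_A`. -/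
def IsConvInvOfId (AA : HomAlgebraStr K A) (AC : HomCoalgebraStr K A)
    (SA : A →ₗ[K] A) : Prop :=
  (∀ a : A, TensorProduct.lift (AA.mul ∘ₗ SA) (AC.comul a) = AC.counit a • AA.one) ∧
  (∀ a : A, TensorProduct.lift (AA.mul.compl₂ SA) (AC.comul a) = AC.counit a • AA.one)

/-- `σ` and `σinv` are convolution inverses of each other. -/
def IsConvInvPair (HB : HomBialgebraStr K H) (AA : HomAlgebraStr K A)
    (σ σinv : H →ₗ[K] H →ₗ[K] A) : Prop :=
  (∀ h g : H,
    TensorProduct.lift AA.mul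
      (TensorProduct.map (TensorProduct.lift σ) (TensorProduct.lift σinv)
        (TensorProduct.tensorTensorTensorComm K H H H H (HB.comul h ⊗ₜ[K] HB.comul g)))
    = (HB.counit h * HB.counit g) • AA.one) ∧
  (∀ h g : H,
    TensorProduct.lift AA.mul
      (TensorProduct.map (TensorProduct.lift σinv) (TensorProduct.lift σ)
        (TensorProduct.tensorTensorTensorComm K H H H H (HB.comul h ⊗ₜ[K] HB.comul g)))
    = (HB.counit h * HB.counit g) • AA.one)

/-- The Radford antipode formula
`S(a ⊗ h) = (1_A ⊗ S_H(α^{m−1}(a₍₋₁₎)α⁻²(h)))·(S_A(a₍₀₎) ⊗ 1_H)`. -/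
def radfordAntipodeElem (HB : HomBialgebraStr K H) (AA : HomAlgebraStr K A)
    (coact : A →ₗ[K] H ⊗[K] A)
    (Bmul : (A ⊗[K] H) →ₗ[K] (A ⊗[K] H) →ₗ[K] (A ⊗[K] H))
    (SH : H →ₗ[K] H) (SA : A →ₗ[K] A) (m : ℤ) (a : A) (h : H) : A ⊗[K] H :=
  TensorProduct.lift Bmul
    (TensorProduct.map
      ((TensorProduct.mk K A H AA.one) ∘ₗ SH ∘ₗ (HB.mul.flip ((HB.str ^ (-2 : ℤ)) h)) ∘ₗ
        (HB.str ^ (m - 1)).toLinearMap)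
      (((TensorProduct.mk K A H).flip HB.one) ∘ₗ SA)
      (coact a))

/-- `φ^l(l ⊗ (a ⊗ h)) = (α(l₁₁)·β⁻¹(a)) σ(α^{k+2−m}(l₁₂), α^{k+1}(h₁)) ⊗ α^{1−m}(l₂)α(h₂)`. -/
def philElem (HB : HomBialgebraStr K H) (AA : HomAlgebraStr K A)
    (act : H →ₗ[K] A →ₗ[K] A) (σ : H →ₗ[K] H →ₗ[K] A) (m k : ℤ)
    (l : H) (a : A) (h : H) : A ⊗[K] H :=
  TensorProduct.map
    (TensorProduct.lift AA.mul ∘ₗ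
      TensorProduct.map ((act.flip ((AA.str ^ (-1 : ℤ)) a)) ∘ₗ HB.str.toLinearMap)
        (TensorProduct.lift σ ∘ₗ
          TensorProduct.map (HB.str ^ (k+2-m)).toLinearMap (HB.str ^ (k+1)).toLinearMap) ∘ₗ
      (TensorProduct.assoc K H H H).toLinearMap)
    (TensorProduct.lift HB.mul ∘ₗ
      TensorProduct.map (HB.str ^ (1-m)).toLinearMap HB.str.toLinearMap)
    (TensorProduct.map (TensorProduct.map HB.comul (LinearMap.id : H →ₗ[K] H))
      (LinearMap.id : H ⊗[K] H →ₗ[K] H ⊗[K] H)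
      (TensorProduct.tensorTensorTensorComm K H H H H (HB.comul l ⊗ₜ[K] HB.comul h)))

/-- `φ^r((a ⊗ h) ⊗ l) = a σ(α^{k+1}(h₁), α^{k+1−m}(l₁)) ⊗ α(h₂)α^{1−m}(l₂)`. -/
def phirElem (HB : HomBialgebraStr K H) (AA : HomAlgebraStr K A)
    (σ : H →ₗ[K] H →ₗ[K] A) (m k : ℤ) (a : A) (h : H) (l : H) : A ⊗[K] H :=
  TensorProduct.map
    ((AA.mul a) ∘ₗ TensorProduct.lift σ ∘ₗ
      TensorProduct.map (HB.str ^ (k+1)).toLinearMap (HB.str ^ (k+1-m)).toLinearMap)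
    (TensorProduct.lift HB.mul ∘ₗ
      TensorProduct.map HB.str.toLinearMap (HB.str ^ (1-m)).toLinearMap)
    (TensorProduct.tensorTensorTensorComm K H H H H (HB.comul h ⊗ₜ[K] HB.comul l))

/-- `(M, μ, φ)` is a left `(H, α, σ̄)`-Hom module. -/
def IsLeftSigmaHomModule (HB : HomBialgebraStr K H)
    (mulM : M →ₗ[K] M →ₗ[K] M) (strM : M →ₗ[K] M)
    (σbar : H →ₗ[K] H →ₗ[K] M) (φ : H →ₗ[K] M →ₗ[K] M) : Prop :=
  (∀ (g l : H) (x : M),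
    φ (HB.str g) (φ l x)
      = TensorProduct.lift mulM
          (TensorProduct.map (strM ∘ₗ TensorProduct.lift σbar)
            ((φ.flip x) ∘ₗ TensorProduct.lift HB.mul)
            (TensorProduct.tensorTensorTensorComm K H H H H (HB.comul g ⊗ₜ[K] HB.comul l))))
  ∧ (∀ x : M, φ HB.one x = strM x)

/-- `(M, μ, φ)` is a right `(H, α, σ̄)`-Hom module. -/
def IsRightSigmaHomModule (HB : HomBialgebraStr K H)
    (mulM : M →ₗ[K] M →ₗ[K] M) (strM : M →ₗ[K] M)
    (σbar : H →ₗ[K] H →ₗ[K] M) (φ : M →ₗ[K] H →ₗ[K] M) : Prop :=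
  (∀ (x : M) (l g : H),
    φ (φ x l) (HB.str g)
      = mulM (strM x)
          (TensorProduct.lift φ
            (TensorProduct.map (TensorProduct.lift σbar) (TensorProduct.lift HB.mul)
              (TensorProduct.tensorTensorTensorComm K H H H H (HB.comul l ⊗ₜ[K] HB.comul g)))))
  ∧ (∀ x : M, φ x HB.one = strM x)

/-- `(M, μ, φ⁺, φ⁻)` is a weak `(H, α)` Hom-bimodule. -/
def IsWeakHomBimodule (HB : HomBialgebraStr K H) (strM : M →ₗ[K] M)
    (φl : H →ₗ[K] M →ₗ[K] M) (φr : M →ₗ[K] H →ₗ[K] M) : Prop :=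
  (∀ x : M, φl HB.one x = strM x) ∧ (∀ x : M, φr x HB.one = strM x) ∧
  (∀ (h : H) (x : M) (g : H), φl (HB.str h) (φr x g) = φr (φl h x) (HB.str g))

/-- A weak `m`-Hom admissible mapping system `C ⇄ A ⇄ H`. -/
structure WeakAdmissibleSystem (HB : HomBialgebraStr K H)
    (CA : HomAlgebraStr K C) (CC : HomCoalgebraStr K C)
    (coact : C →ₗ[K] H ⊗[K] C) (m : ℤ) (AB : HomBialgebraStr K A)
    (j : C →ₗ[K] A) (p : A →ₗ[K] C) (i : H →ₗ[K] A) (π : A →ₗ[K] H) : Prop where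
  c_str_eq : CA.str = CC.str
  p_j : ∀ c : C, p (j c) = c
  pi_i : ∀ h : H, π (i h) = h
  pi_mul : ∀ a b : A, π (AB.mul a b) = HB.mul (π a) (π b)
  pi_one : π AB.one = HB.one
  pi_str : ∀ a : A, π (AB.str a) = HB.str (π a)
  pi_comul : ∀ a : A, TensorProduct.map π π (AB.comul a) = HB.comul (π a)
  pi_counit : ∀ a : A, HB.counit (π a) = AB.counit a
  i_one : i HB.one = AB.one
  i_str : ∀ h : H, i (HB.str h) = AB.str (i h)
  i_comul : ∀ h : H, TensorProduct.map i i (HB.comul h) = AB.comul (i h)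
  i_counit : ∀ h : H, AB.counit (i h) = HB.counit h
  p_str : ∀ a : A, p (AB.str a) = CC.str (p a)
  p_comul : ∀ a : A, TensorProduct.map p p (AB.comul a) = CC.comul (p a)
  p_counit : ∀ a : A, CC.counit (p a) = AB.counit a
  j_mul : ∀ c d : C, j (CA.mul c d) = AB.mul (j c) (j d)
  j_one : j CA.one = AB.one
  j_str : ∀ c : C, j (CC.str c) = AB.str (j c)
  p_left_act : ∀ (h : H) (a : A),
    p (AB.mul (i ((HB.str ^ (-m)) h)) a) = HB.counit h • CC.str (p a)
  p_right_act : ∀ (a : A) (h : H),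
    p (AB.mul a (i ((HB.str ^ (-m)) h))) = HB.counit h • CC.str (p a)
  sigma_mod : ∃ σbar : H →ₗ[K] H →ₗ[K] A,
    IsLeftSigmaHomModule HB AB.mul AB.str.toLinearMap σbar
        (AB.mul ∘ₗ i ∘ₗ (HB.str ^ (-m)).toLinearMap)
      ∧ IsRightSigmaHomModule HB AB.mul AB.str.toLinearMap σbar
        (AB.mul.compl₂ (i ∘ₗ (HB.str ^ (-m)).toLinearMap))
  sub_l : ∀ c : C, ∃ y : H ⊗[K] C,
    TensorProduct.map ((HB.str ^ (-m)).toLinearMap ∘ₗ π) (LinearMap.id : A →ₗ[K] A)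
        (AB.comul (j c))
      = TensorProduct.map (LinearMap.id : H →ₗ[K] H) j y
  sub_r : ∀ c : C, ∃ z : C ⊗[K] H,
    TensorProduct.map (LinearMap.id : A →ₗ[K] A) ((HB.str ^ (-m)).toLinearMap ∘ₗ π)
        (AB.comul (j c))
      = TensorProduct.map j (LinearMap.id : H →ₗ[K] H) z
  p_col : ∀ c : C,
    TensorProduct.map (LinearMap.id : H →ₗ[K] H) p
        (TensorProduct.map ((HB.str ^ (-m)).toLinearMap ∘ₗ π) (LinearMap.id : A →ₗ[K] A)
          (AB.comul (j c)))
      = coact c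
  p_cor : ∀ c : C,
    TensorProduct.map p (LinearMap.id : H →ₗ[K] H)
        (TensorProduct.map (LinearMap.id : A →ₗ[K] A) ((HB.str ^ (-m)).toLinearMap ∘ₗ π)
          (AB.comul (j c)))
      = CC.str.symm c ⊗ₜ[K] HB.one
  split : ∀ a : A,
    TensorProduct.lift AB.mul (TensorProduct.map (j ∘ₗ p) (i ∘ₗ π) (AB.comul a)) = a

/-- The map `f : C ♯ H → A`, `c ⊗ h ↦ γ⁻¹(j(c)i(h))`. -/
def admF (AB : HomBialgebraStr K A) (j : C →ₗ[K] A) (i : H →ₗ[K] A) :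
    C ⊗[K] H →ₗ[K] A :=
  AB.str.symm.toLinearMap ∘ₗ TensorProduct.lift ((AB.mul ∘ₗ j).compl₂ i)

/-- The map `g : A → C ♯ H`, `a ↦ β(p(a₁)) ⊗ α(π(a₂))`. -/
def admG (HB : HomBialgebraStr K H) (CC : HomCoalgebraStr K C)
    (AB : HomBialgebraStr K A) (p : A →ₗ[K] C) (π : A →ₗ[K] H) :
    A →ₗ[K] C ⊗[K] H :=
  TensorProduct.map (CC.str.toLinearMap ∘ₗ p) (HB.str.toLinearMap ∘ₗ π) ∘ₗ AB.comul

end Defs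

/-! Since `a = j(p(a₁)) i(π(a₂))` and `Δ` is multiplicative, both sides are determined by their
values on products `j(c) i(h)`. There the right action through `i` becomes trivial under `p`
(`p(x i(g)) = ε(g) β(p(x))`), the counit collapses `Δ(h)` back to `h`, and the coaction of `c` is
read off `Δ(j(c))` through `α^{-m} π ⊗ p`, so the powers of `α` on the two sides agree. -/

namespace HomBialgebraStr

variable {K H : Type*} [Field K] [AddCommGroup H] [Module K H] (HB : HomBialgebraStr K H)

lemma counit_str_pow (n : ℕ) (h : H) : HB.counit ((HB.str ^ n) h) = HB.counit h := by
  induction n generalizing h with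
  | zero => rfl
  | succ n ih => rw [pow_succ, LinearEquiv.mul_apply, ih, HB.counit_str]

lemma counit_str_zpow (n : ℤ) (h : H) : HB.counit ((HB.str ^ n) h) = HB.counit h := by
  obtain ⟨n, rfl | rfl⟩ := Int.eq_nat_or_neg n
  · rw [zpow_natCast, counit_str_pow]
  · rw [zpow_neg, zpow_natCast, ← HB.counit_str_pow n, LinearEquiv.coe_inv,
      LinearEquiv.apply_symm_apply]

end HomBialgebraStr

section TensorAlgebra

variable {K H M N : Type*} [Field K] [AddCommGroup H] [Module K H] [AddCommGroup M] [Module K M]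
  [AddCommGroup N] [Module K N]

@[simp]
lemma tensorSquareMul_tmul (mul : N →ₗ[K] N →ₗ[K] N) (a b c d : N) :
    tensorSquareMul mul (a ⊗ₜ[K] b) (c ⊗ₜ[K] d) = mul a c ⊗ₜ[K] mul b d := by
  simp [tensorSquareMul]

@[simp]
lemma coactMulAux_tmul (HB : HomBialgebraStr K H) (s : ℤ) (f : M →ₗ[K] M) (g : H) (x : M)
    (h : H) :
    coactMulAux HB s f ((g ⊗ₜ[K] x) ⊗ₜ[K] h) = HB.mul ((HB.str ^ s) g) h ⊗ₜ[K] f x := by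
  simp [coactMulAux]

lemma coactMulAux_map_zpow_comp (HB : HomBialgebraStr K H) (s t : ℤ) (f : M →ₗ[K] M)
    (φ : N →ₗ[K] H) (ψ : N →ₗ[K] M) (X : N ⊗[K] N) (h : H) :
    coactMulAux HB s f (TensorProduct.map ((HB.str ^ t).toLinearMap ∘ₗ φ) ψ X ⊗ₜ[K] h)
      = coactMulAux HB (s + t) f (TensorProduct.map φ ψ X ⊗ₜ[K] h) := by
  induction X using TensorProduct.induction_on with
  | zero => simp
  | tmul x y => simp [zpow_add]
  | add x y hx hy => simp only [map_add, TensorProduct.add_tmul, hx, hy]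

end TensorAlgebra

namespace WeakAdmissibleSystem

variable {K C H A : Type*} [Field K] [AddCommGroup C] [Module K C] [AddCommGroup H] [Module K H]
  [AddCommGroup A] [Module K A]
  {HB : HomBialgebraStr K H} {CA : HomAlgebraStr K C} {CC : HomCoalgebraStr K C}
  {coact : C →ₗ[K] H ⊗[K] C} {m : ℤ} {AB : HomBialgebraStr K A}
  {j : C →ₗ[K] A} {p : A →ₗ[K] C} {i : H →ₗ[K] A} {π : A →ₗ[K] H}

lemma coact_eq (sys : WeakAdmissibleSystem HB CA CC coact m AB j p i π) (c : C) :
    coact c = TensorProduct.map ((HB.str ^ (-m)).toLinearMap ∘ₗ π) p (AB.comul (j c)) := by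
  rw [← sys.p_col c, ← LinearMap.comp_apply, ← TensorProduct.map_comp]
  rfl

lemma p_mul_i (sys : WeakAdmissibleSystem HB CA CC coact m AB j p i π) (a : A) (g : H) :
    p (AB.mul a (i g)) = HB.counit g • CC.str (p a) := by
  have h := sys.p_right_act a ((HB.str ^ m) g)
  rwa [← LinearEquiv.mul_apply, ← zpow_add, neg_add_cancel, zpow_zero, LinearEquiv.coe_one,
    id, HB.counit_str_zpow] at h

lemma map_str_pi_p_mul_i (sys : WeakAdmissibleSystem HB CA CC coact m AB j p i π)
    (X : A ⊗[K] A) (Z : H ⊗[K] H) :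
    TensorProduct.map (HB.str.toLinearMap ∘ₗ π) p
        (tensorSquareMul AB.mul X (TensorProduct.map i i Z))
      = coactMulAux HB 1 CC.str.toLinearMap (TensorProduct.map π p X ⊗ₜ[K]
          HB.str (TensorProduct.rid K H (TensorProduct.map LinearMap.id HB.counit Z))) := by
  induction X using TensorProduct.induction_on with
  | zero => simp
  | add x y hx hy => simp only [map_add, LinearMap.add_apply, TensorProduct.add_tmul, hx, hy]
  | tmul x₁ x₂ =>
    induction Z using TensorProduct.induction_on with
    | zero => simp
    | add z w hz hw => simp only [map_add, TensorProduct.tmul_add, hz, hw]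
    | tmul g₁ g₂ => simp [sys.pi_mul, sys.pi_i, sys.p_mul_i, HB.str_mul]

lemma map_str_pi_p_comul_mul (sys : WeakAdmissibleSystem HB CA CC coact m AB j p i π)
    (c : C) (h : H) :
    TensorProduct.map (HB.str.toLinearMap ∘ₗ π) p (AB.comul (AB.mul (j c) (i h)))
      = coactMulAux HB (m + 1) CC.str.toLinearMap (coact c ⊗ₜ[K] h) := by
  rw [AB.comul_mul, ← sys.i_comul, sys.map_str_pi_p_mul_i, HB.counit_comul_right,
    LinearEquiv.apply_symm_apply, sys.coact_eq, coactMulAux_map_zpow_comp, add_neg_cancel_comm]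

end WeakAdmissibleSystem

theorem admissible_system_coaction_identity_general
    {K C H A : Type*} [Field K] [AddCommGroup C] [Module K C] [AddCommGroup H] [Module K H]
    [AddCommGroup A] [Module K A]
    (HB : HomBialgebraStr K H) (CA : HomAlgebraStr K C) (CC : HomCoalgebraStr K C)
    (coact : C →ₗ[K] H ⊗[K] C) (m : ℤ)
    (AB : HomBialgebraStr K A)
    (j : C →ₗ[K] A) (p : A →ₗ[K] C) (i : H →ₗ[K] A) (π : A →ₗ[K] H)
    (sys : WeakAdmissibleSystem HB CA CC coact m AB j p i π) :
    ∀ a : A,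
      coactMulAux HB (m+1) CC.str.toLinearMap
          (TensorProduct.map (coact ∘ₗ p) π (AB.comul a))
        = TensorProduct.map (HB.str.toLinearMap ∘ₗ π) p (AB.comul a) := by
  intro a
  have hmaps : coactMulAux HB (m + 1) CC.str.toLinearMap ∘ₗ TensorProduct.map (coact ∘ₗ p) π
      = (TensorProduct.map (HB.str.toLinearMap ∘ₗ π) p ∘ₗ AB.comul) ∘ₗ
          TensorProduct.lift AB.mul ∘ₗ TensorProduct.map (j ∘ₗ p) (i ∘ₗ π) :=
    TensorProduct.ext' fun u v => (sys.map_str_pi_p_comul_mul (p u) (π v)).symm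
  conv_rhs => rw [← sys.split a]
  exact LinearMap.congr_fun hmaps (AB.comul a)

/-- Equation (4.1) in the proof of Theorem 4.11:
`α^{m+1}((p(a₁))₍₋₁₎) π(a₂) ⊗ β((p(a₁))₍₀₎) = α(π(a₁)) ⊗ p(a₂)`. -/
theorem admissible_system_coaction_identity
    {K C H A : Type*} [Field K] [AddCommGroup C] [Module K C] [AddCommGroup H] [Module K H]
    [AddCommGroup A] [Module K A]
    (HB : HomBialgebraStr K H) (CA : HomAlgebraStr K C) (CC : HomCoalgebraStr K C)
    (act : H →ₗ[K] C →ₗ[K] C) (hact : IsWeakModuleAlgebra HB CA act)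
    (coact : C →ₗ[K] H ⊗[K] C) (hcc : IsComoduleCoalgebra HB CC coact)
    (σ : H →ₗ[K] H →ₗ[K] C) (m k : ℤ)
    (B : HomBialgebraStr K (C ⊗[K] H))
    (hB : IsRadfordBiproduct HB CA CC act coact σ m k B)
    (AB : HomBialgebraStr K A)
    (j : C →ₗ[K] A) (p : A →ₗ[K] C) (i : H →ₗ[K] A) (π : A →ₗ[K] H)
    (sys : WeakAdmissibleSystem HB CA CC coact m AB j p i π) :
    ∀ a : A,
      coactMulAux HB (m+1) CC.str.toLinearMap
          (TensorProduct.map (coact ∘ₗ p) π (AB.comul a))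
        = TensorProduct.map (HB.str.toLinearMap ∘ₗ π) p (AB.comul a) :=
  admissible_system_coaction_identity_general HB CA CC coact m AB j p i π sys
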